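/- Let n ∈ ℕ and let x ∈ ℝ with x > 1, x not an integer, and ⌊x⌋ + n odd. With α = x − ⌊x⌋, one has ((1−α)/(2−α))·D_n(x−1) + (1/(2−α))·D_n(⌊x⌋+1) − (1/2)·D_n(x−1) − (1/2)·D_n(x+1) ≥ 0. -/

import Mathlib

open Classical in
/-- The recursively defined functions `D n : ℝ → ℝ`. -/
noncomputable def D : ℕ → ℝ → ℝ
  | 0, x => if x ≤ 0 then 1 else 0
  | n + 1, x =>
    if x ≤ 0 then 1
    else if ((n : ℝ) + 1) < x then 0
    else if ∃ m : ℤ, x = (m : ℝ) then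
      (1 / 2) * D n (x - 1) + (1 / 2) * D n (x + 1)
    else if Odd n ∧ x < 1 then
      (1 - x) * D n 0 + x * D n 1
    else if Even (⌊x⌋ + (n : ℤ)) then
      (1 / (1 + Int.fract x)) * D n (⌊x⌋ : ℝ)
        + (Int.fract x / (1 + Int.fract x)) * D n (x + 1)
    else
      ((1 - Int.fract x) / (2 - Int.fract x)) * D n (x - 1)
        + (1 / (2 - Int.fract x)) * D n (⌈x⌉ : ℝ)

/-! Write `x = p + β` with `p = ⌊x⌋` and `β = fract x`; clearing denominators, the claim reads
`β D_n(x - 1) + (2 - β) D_n(x + 1) ≤ 2 D_n(p + 1)`. This is proved by induction on `n`. The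
recursions at integer points and in the last branch stay valid to the right of the support
`(-∞, n]`, where both sides vanish, so expanding all three values one level down turns the
inequality into `(1 - β) / (2 - β)` times the same inequality at `x - 1`. When `p = 1` the point
`x - 1` falls in `(0, 1)` instead, and what is needed is `β + D_k(1 + β) ≤ (1 + β) D_k(1)` for
odd `k`, which comes down to the monotonicity of `n ↦ D_n(1)`. -/

theorem D_of_nonpos (n : ℕ) {x : ℝ} (hx : x ≤ 0) : D n x = 1 := by
  cases n <;> rw [D, if_pos hx]

theorem D_of_lt (n : ℕ) {x : ℝ} (hx : (n : ℝ) < x) : D n x = 0 := by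
  have hx0 : ¬x ≤ 0 := by linarith [n.cast_nonneg (α := ℝ)]
  cases n with
  | zero => rw [D, if_neg hx0]
  | succ k => rw [D, if_neg hx0, if_pos (by push_cast at hx; exact hx)]

theorem D_nonneg (n : ℕ) (x : ℝ) : 0 ≤ D n x := by
  induction n generalizing x with
  | zero => rw [D]; split_ifs <;> norm_num
  | succ k ih =>
    have hβ0 := Int.fract_nonneg x
    have hβ1 := Int.fract_lt_one x
    rw [D]
    split_ifs with _ _ _ hlin
    · exact zero_le_one
    · exact le_rfl
    · linarith [ih (x - 1), ih (x + 1)]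
    · have : 0 ≤ 1 - x := by linarith [hlin.2]
      have : 0 ≤ x := by linarith
      positivity [ih 0, ih 1]
    · have := ih ⌊x⌋; have := ih (x + 1)
      positivity
    · have : 0 ≤ 1 - Int.fract x := by linarith
      have : 0 < 2 - Int.fract x := by linarith
      have := ih (x - 1); have := ih ⌈x⌉
      positivity

theorem D_succ_intCast_add_one (k : ℕ) {m : ℤ} (hm : 0 ≤ m) :
    D (k + 1) (m + 1) = 1 / 2 * D k m + 1 / 2 * D k (m + 2) := by
  have hm' : (0 : ℝ) ≤ m := by exact_mod_cast hm
  by_cases hmk : (m : ℝ) + 1 ≤ k + 1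
  · rw [D, if_neg (by linarith), if_neg (not_lt.mpr hmk), if_pos ⟨m + 1, by push_cast; ring⟩]
    ring_nf
  · rw [D_of_lt _ (by push_cast; linarith), D_of_lt k (by linarith), D_of_lt k (by linarith)]
    ring

theorem D_succ_one (k : ℕ) : D (k + 1) 1 = 1 / 2 + 1 / 2 * D k 2 := by
  simpa [D_of_nonpos k le_rfl] using D_succ_intCast_add_one k le_rfl

theorem D_succ_of_lt_one {k : ℕ} (hk : Odd k) {x : ℝ} (hx0 : 0 < x) (hx1 : x < 1) :
    D (k + 1) x = (1 - x) * D k 0 + x * D k 1 := by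
  have hint : ¬∃ m : ℤ, x = m := by
    rintro ⟨m, rfl⟩
    have : 0 < m := by exact_mod_cast hx0
    have : m < 1 := by exact_mod_cast hx1
    omega
  rw [D, if_neg (by linarith), if_neg (by linarith [k.cast_nonneg (α := ℝ)]), if_neg hint,
    if_pos ⟨hk, hx1⟩]

theorem D_succ_intCast_add (k : ℕ) {p : ℤ} (hp : 1 ≤ p) (hpk : Odd (p + k)) {β : ℝ}
    (hβ0 : 0 < β) (hβ1 : β < 1) :
    D (k + 1) (p + β) = (1 - β) / (2 - β) * D k (p + β - 1) + 1 / (2 - β) * D k (p + 1) := by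
  have hp' : (1 : ℝ) ≤ p := by exact_mod_cast hp
  by_cases hpk' : (p : ℝ) + β ≤ k + 1
  · have hfloor : ⌊(p : ℝ) + β⌋ = p := by
      rw [add_comm, Int.floor_add_intCast, Int.floor_eq_zero_iff.mpr ⟨hβ0.le, hβ1⟩, zero_add]
    have hfract : Int.fract ((p : ℝ) + β) = β := by
      rw [add_comm, Int.fract_add_intCast, Int.fract_eq_self.mpr ⟨hβ0.le, hβ1⟩]
    have hceil : ⌈(p : ℝ) + β⌉ = p + 1 := by
      rw [Int.ceil_eq_iff]; push_cast; constructor <;> linarith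
    have hint : ¬∃ m : ℤ, (p : ℝ) + β = m := by
      rintro ⟨m, hm⟩
      rw [hm, Int.fract_intCast] at hfract
      linarith
    rw [D, if_neg (by linarith), if_neg (not_lt.mpr hpk'), if_neg hint,
      if_neg (fun h => by linarith [h.2]), hfloor, if_neg (Int.not_even_iff_odd.mpr hpk),
      hfract, hceil]
    push_cast; rfl
  · rw [D_of_lt _ (by push_cast; linarith), D_of_lt k (by linarith), D_of_lt k (by linarith)]
    ring

theorem D_succ_intCast_add_add_one (k : ℕ) {p : ℤ} (hp : 0 ≤ p) (hpk : Odd (p + (k + 1)))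
    {β : ℝ} (hβ0 : 0 < β) (hβ1 : β < 1) :
    D (k + 1) (p + β + 1) = (1 - β) / (2 - β) * D k (p + β) + 1 / (2 - β) * D k (p + 2) := by
  have h :=
    D_succ_intCast_add k (p := p + 1) (by omega) (by rwa [add_right_comm, add_assoc]) hβ0 hβ1
  push_cast at h
  rwa [add_right_comm, add_sub_cancel_right, add_assoc _ (1 : ℝ), one_add_one_eq_two] at h

theorem D_le_D_succ_natCast (n m : ℕ) : D n m ≤ D (n + 1) m := by
  induction n generalizing m with
  | zero =>
    rcases m with _ | m
    · rw [Nat.cast_zero, D_of_nonpos 0 le_rfl, D_of_nonpos 1 le_rfl]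
    · rw [D_of_lt 0 (by push_cast; positivity)]
      exact D_nonneg _ _
  | succ k ih =>
    rcases m with _ | m
    · rw [Nat.cast_zero, D_of_nonpos _ le_rfl, D_of_nonpos _ le_rfl]
    · have hk := D_succ_intCast_add_one k (m := m) (by positivity)
      have hk1 := D_succ_intCast_add_one (k + 1) (m := m) (by positivity)
      have h₀ := ih m
      have h₂ := ih (m + 2)
      push_cast at hk hk1 h₂ ⊢
      linarith

theorem monotone_D_natCast (m : ℕ) : Monotone (fun n => D n m) :=
  monotone_nat_of_le_succ fun n => D_le_D_succ_natCast n m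

theorem D_one_add_le_of_odd {k : ℕ} (hk : Odd k) {β : ℝ} (hβ0 : 0 < β) (hβ1 : β < 1) :
    β + D k (1 + β) ≤ (1 + β) * D k 1 := by
  obtain ⟨_ | t, rfl⟩ := hk
  · show β + D (0 + 1) (1 + β) ≤ (1 + β) * D (0 + 1) 1
    rw [D_of_lt (0 + 1) (by push_cast; linarith), D_succ_one 0, D_of_lt 0 (by norm_num)]
    linarith
  set j := 2 * t + 1 with hj
  have hodd : Odd j := ⟨t, rfl⟩
  rw [show 2 * (t + 1) + 1 = j + 1 + 1 by omega]
  have hbranch :=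
    D_succ_intCast_add (j + 1) (p := 1) le_rfl ⟨t + 1, by push_cast [hj]; ring⟩ hβ0 hβ1
  rw [Int.cast_one, add_sub_cancel_left, one_add_one_eq_two,
    D_succ_of_lt_one hodd hβ0 hβ1, D_of_nonpos j le_rfl] at hbranch
  have hone := D_succ_one (j + 1)
  have hmono : D j 1 ≤ D (j + 1 + 1) 1 := by
    simpa using monotone_D_natCast 1 (show j ≤ j + 1 + 1 by omega)
  have h2β : 0 < 2 - β := by linarith
  have hgap : (1 + β) * D (j + 1 + 1) 1 - (β + D (j + 1 + 1) (1 + β))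
      = β * (1 - β) * (D (j + 1 + 1) 1 - D j 1) / (2 - β) := by
    rw [hbranch, hone]
    field_simp
    ring
  have : 0 ≤ β * (1 - β) * (D (j + 1 + 1) 1 - D j 1) / (2 - β) := by
    apply div_nonneg _ h2β.le
    apply mul_nonneg (mul_nonneg hβ0.le (by linarith)) (by linarith)
  linarith

theorem mul_D_sub_one_add_mul_D_add_one_le (n : ℕ) {p : ℤ} (hp : 1 ≤ p) (hpn : Odd (p + n))
    {β : ℝ} (hβ0 : 0 < β) (hβ1 : β < 1) :
    β * D n (p + β - 1) + (2 - β) * D n (p + β + 1) ≤ 2 * D n (p + 1) := by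
  induction n generalizing p with
  | zero =>
    have hp' : (1 : ℝ) ≤ p := by exact_mod_cast hp
    rw [D_of_lt 0 (by push_cast; linarith), D_of_lt 0 (by push_cast; linarith),
      D_of_lt 0 (by push_cast; linarith)]
    norm_num
  | succ k ih =>
    have h2β : 0 < 2 - β := by linarith
    have hmid : D (k + 1) (p + 1) = 1 / 2 * D k p + 1 / 2 * D k (p + 2) :=
      D_succ_intCast_add_one k (by omega)
    rw [D_succ_intCast_add_add_one k (by omega) (by exact_mod_cast hpn) hβ0 hβ1, hmid]
    obtain rfl | hp2 := hp.eq_or_lt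
    · have hk : Odd k := by simpa [parity_simps] using hpn
      have hleft : D (k + 1) ((1 : ℤ) + β - 1) = (1 - β) + β * D k 1 := by
        rw [Int.cast_one, add_sub_cancel_left, D_succ_of_lt_one hk hβ0 hβ1, D_of_nonpos k le_rfl,
          mul_one]
      have h1 := D_one_add_le_of_odd hk hβ0 hβ1
      rw [hleft]
      push_cast
      have : 0 ≤ (1 - β) * ((1 + β) * D k 1 - (β + D k (1 + β))) :=
        mul_nonneg (by linarith) (by linarith)
      field_simp
      linear_combination this
    · have hpar : Odd (p - 1 + k) := by
        rw [show p - 1 + k = p + (k + 1 : ℕ) - 2 by push_cast; ring]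
        exact hpn.sub_even even_two
      have hleft : D (k + 1) (p + β - 1)
          = (1 - β) / (2 - β) * D k (p + β - 1 - 1) + 1 / (2 - β) * D k p := by
        have h := D_succ_intCast_add k (p := p - 1) (by omega) hpar hβ0 hβ1
        push_cast at h
        rwa [sub_add_eq_add_sub, sub_add_cancel] at h
      have hih := ih (p := p - 1) (by omega) hpar
      push_cast at hih
      rw [sub_add_eq_add_sub, sub_add_cancel, sub_add_cancel] at hih
      rw [hleft]
      have : 0 ≤ (1 - β) * (2 * D k p - (β * D k (p + β - 1 - 1) + (2 - β) * D k (p + β))) :=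
        mul_nonneg (by linarith) (by linarith)
      field_simp
      linear_combination this

/-- part (c) of Lemma 3.3. -/
theorem D_ineq_c (n : ℕ) (x : ℝ) (hx1 : 1 < x) (hint : ¬∃ m : ℤ, x = (m : ℝ))
    (hodd : Odd (⌊x⌋ + (n : ℤ))) :
    ((1 - Int.fract x) / (2 - Int.fract x)) * D n (x - 1)
      + (1 / (2 - Int.fract x)) * D n ((⌊x⌋ : ℝ) + 1)
      - (1 / 2) * D n (x - 1) - (1 / 2) * D n (x + 1) ≥ 0 := by
  set β := Int.fract x with hβ
  have hβ0 : 0 < β := Int.fract_pos.mpr fun h => hint ⟨⌊x⌋, h⟩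
  have hβ1 : β < 1 := Int.fract_lt_one x
  have key := mul_D_sub_one_add_mul_D_add_one_le n (Int.le_floor.mpr (by exact_mod_cast hx1.le))
    hodd hβ0 hβ1
  rw [hβ, Int.floor_add_fract] at key
  have h2β : 0 < 2 - β := by linarith
  have hgap : (1 - β) / (2 - β) * D n (x - 1) + 1 / (2 - β) * D n (⌊x⌋ + 1)
        - 1 / 2 * D n (x - 1) - 1 / 2 * D n (x + 1)
      = (2 * D n (⌊x⌋ + 1) - (β * D n (x - 1) + (2 - β) * D n (x + 1))) / (2 * (2 - β)) := by
    field_simp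
    ring
  rw [ge_iff_le, hgap]
  exact div_nonneg (by linarith) (by positivity)
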